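/- arXiv:1801.08870 — 2 statements merged into one kernel-verified Lean document; each statement's English description precedes it below -/
import Mathlib

section
/- Let L be a smooth (Lipschitz, sufficiently differentiable) operator and consider the ODE w'(t) = L(w(t)) with w(t_n) = w^n. Define the intermediate state w* = w^n + (Δt/2) L(w^n) + (Δt²/8) ∂_t L(w^n), where ∂_t L(w) denotes (∂L/∂w)(w) · L(w). Then the update w^{n+1} = w^n + Δt L(w^n) + (Δt²/6)(∂_t L(w^n) + 2 ∂_t L(w*)) satisfies w^{n+1} = w(t_n + Δt) + O(Δt⁵), i.e. the two-stage method is fourth-order accurate in time. -/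
open Asymptotics Filter
open scoped ContDiff

private lemma deriv_isBigO_pow {E : Type*} [NormedAddCommGroup E] [NormedSpace ℝ E]
    {f f' : ℝ → E} (n : ℕ)
    (hd : ∀ t, HasDerivAt f (f' t) t) (h0 : f 0 = 0)
    (hO : f' =O[nhds 0] fun t => t ^ n) :
    f =O[nhds 0] fun t => t ^ (n + 1) := by
  obtain ⟨C, hC, hbound⟩ := hO.exists_nonneg
  rw [Asymptotics.isBigOWith_iff] at hbound
  obtain ⟨ε, hε, hball⟩ := Metric.eventually_nhds_iff.mp hbound
  rw [Asymptotics.isBigO_iff]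
  refine ⟨C, Metric.eventually_nhds_iff.mpr ⟨ε, hε, ?_⟩⟩
  intro t ht
  simp only [Real.dist_eq, sub_zero] at ht
  have key : ∀ x ∈ Set.uIcc (0:ℝ) t, ‖f' x‖ ≤ C * |t| ^ n := by
    intro x hx
    have hxt : |x| ≤ |t| := by
      rcases Set.mem_uIcc.mp hx with ⟨h1, h2⟩ | ⟨h1, h2⟩ <;>
        rcases abs_cases t with ⟨h3, h4⟩ | ⟨h3, h4⟩ <;> rw [abs_le] <;> constructor <;> linarith
    have hx' : dist x 0 < ε := by simpa [Real.dist_eq] using lt_of_le_of_lt hxt ht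
    have := hball hx'
    calc ‖f' x‖ ≤ C * ‖x ^ n‖ := this
      _ = C * |x| ^ n := by rw [norm_pow]; rfl
      _ ≤ C * |t| ^ n := by gcongr
  have hmvt := (convex_uIcc (0:ℝ) t).norm_image_sub_le_of_norm_hasDerivWithin_le
    (fun x _ => (hd x).hasDerivWithinAt) key Set.left_mem_uIcc Set.right_mem_uIcc
  rw [h0, sub_zero] at hmvt
  calc ‖f t‖ ≤ C * |t| ^ n * ‖t - 0‖ := hmvt
    _ = C * ‖t ^ (n+1)‖ := by
        rw [sub_zero, norm_pow]
        simp only [Real.norm_eq_abs]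
        ring

private lemma taylor_isBigO {E : Type*} [NormedAddCommGroup E] [NormedSpace ℝ E]
    (n : ℕ) : ∀ (f : ℝ → E), ContDiff ℝ ∞ f →
    (fun s => f s - ∑ j ∈ Finset.range n, (s ^ j / j.factorial) • iteratedDeriv j f 0)
      =O[nhds 0] fun s => s ^ n := by
  induction n with
  | zero =>
    intro f hf
    simp only [Finset.range_zero, Finset.sum_empty, sub_zero, pow_zero]
    exact (hf.continuous.tendsto 0).isBigO_one ℝ
  | succ n ih =>
    intro f hf
    have hdf : ContDiff ℝ ∞ (deriv f) := (contDiff_infty_iff_deriv.mp hf).2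
    apply deriv_isBigO_pow (f' := fun s =>
      deriv f s - ∑ j ∈ Finset.range n, (s ^ j / j.factorial) • iteratedDeriv j (deriv f) 0)
    · intro t
      have h1 : HasDerivAt f (deriv f t) t := (hf.differentiable (by simp) t).hasDerivAt
      have h2 : HasDerivAt (fun s : ℝ => ∑ j ∈ Finset.range (n+1),
          (s ^ j / j.factorial) • iteratedDeriv j f 0)
          (∑ j ∈ Finset.range (n+1),
            ((j : ℝ) * t ^ (j-1) / j.factorial) • iteratedDeriv j f 0) t := by
        apply HasDerivAt.fun_sum
        intro j _
        exact ((hasDerivAt_pow j t).div_const _).smul_const _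
      have heq : (∑ j ∈ Finset.range (n+1),
            ((j : ℝ) * t ^ (j-1) / j.factorial) • iteratedDeriv j f 0)
          = ∑ j ∈ Finset.range n, (t ^ j / j.factorial) • iteratedDeriv j (deriv f) 0 := by
        rw [Finset.sum_range_succ']
        simp only [Nat.cast_zero, Nat.factorial_zero, Nat.cast_one, pow_zero, zero_mul,
          zero_div, zero_smul, add_zero]
        apply Finset.sum_congr rfl
        intro j _
        rw [← iteratedDeriv_succ']
        congr 1
        rw [Nat.add_sub_cancel, Nat.factorial_succ]
        push_cast
        field_simp
      have := h1.sub h2; rw [heq] at this; exact this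
    · simp [Finset.sum_range_succ']
    · exact ih (deriv f) hdf

private noncomputable def gg {E : Type*} [NormedAddCommGroup E] [NormedSpace ℝ E] (L : E → E) : E → E :=
  fun x => fderiv ℝ L x (L x)

private noncomputable def Wst {E : Type*} [NormedAddCommGroup E] [NormedSpace ℝ E] (L : E → E) (a : E)
    (s : ℝ) : E := a + (s / 2) • L a + (s ^ 2 / 8) • gg L a

private lemma two_stage_aux {E : Type*} [NormedAddCommGroup E] [NormedSpace ℝ E]
    (L : E → E) (hL : ContDiff ℝ ∞ L)
    (u : ℝ → E) (hu : ∀ s, HasDerivAt u (L (u s)) s) (hus : ContDiff ℝ ∞ u) :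
    (fun s : ℝ =>
      u 0 + s • L (u 0) + (s ^ 2 / 6) •
        (gg L (u 0) + (2 : ℝ) • gg L (Wst L (u 0) s)) - u s)
      =O[nhds 0] (fun s : ℝ => s ^ 5) := by
  have hone : (1 : WithTop ℕ∞) ≤ ∞ := by exact_mod_cast le_top
  -- smoothness of gg L
  have hg : ContDiff ℝ ∞ (gg L) := by
    exact (hL.fderiv_right (m := ∞) (by norm_num)).clm_apply hL
  set v : ℝ → E := fun τ => gg L (u τ) with hv_def
  have hvc : ContDiff ℝ ∞ v := hg.comp hus
  -- derivatives of u
  have hderiv_u : deriv u = fun s => L (u s) := funext fun s => (hu s).deriv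
  have hv' : ∀ s, HasDerivAt (fun τ => L (u τ)) (v s) s := fun s =>
    ((hL.differentiable (by simp) (u s)).hasFDerivAt).comp_hasDerivAt s (hu s)
  have hderiv2 : deriv (deriv u) = v := by
    rw [hderiv_u]; exact funext fun s => (hv' s).deriv
  have e1 : iteratedDeriv 1 u 0 = L (u 0) := by rw [iteratedDeriv_one, hderiv_u]
  have hid2 : ∀ n : ℕ, iteratedDeriv (n + 2) u = iteratedDeriv n v := by
    intro n
    rw [show n + 2 = (n + 1) + 1 from rfl, iteratedDeriv_succ', iteratedDeriv_succ', hderiv2]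
  have e0 : iteratedDeriv 0 u 0 = u 0 := by simp [iteratedDeriv_zero]
  have e2 : iteratedDeriv 2 u 0 = v 0 := by rw [hid2 0]; simp [iteratedDeriv_zero]
  have e3 : iteratedDeriv 3 u 0 = iteratedDeriv 1 v 0 := by rw [hid2 1]
  have e4 : iteratedDeriv 4 u 0 = iteratedDeriv 2 v 0 := by rw [hid2 2]
  have f0 : iteratedDeriv 0 v 0 = v 0 := by simp [iteratedDeriv_zero]
  -- Taylor expansions
  have T5 := taylor_isBigO 5 u hus
  have T3u := taylor_isBigO 3 u hus
  have T3v := taylor_isBigO 3 v hvc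
  have htend : Filter.Tendsto (fun s : ℝ => s / 2) (nhds 0) (nhds 0) := by
    simpa using (continuous_id.div_const (2:ℝ)).tendsto 0
  have T3u' := T3u.comp_tendsto htend
  have T3v' := T3v.comp_tendsto htend
  have hhalf : (fun s : ℝ => (s / 2) ^ 3) =O[nhds 0] fun s : ℝ => s ^ 3 := by
    have : (fun s : ℝ => (s / 2) ^ 3) = fun s : ℝ => (1/8) * s ^ 3 := funext fun s => by ring
    rw [this]
    exact (isBigO_refl (fun s : ℝ => s ^ 3) _).const_mul_left _
  -- W s - u (s/2) = O(s^3)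
  have hWd : (fun s : ℝ => Wst L (u 0) s - u (s / 2)) =O[nhds 0] fun s : ℝ => s ^ 3 := by
    have hsum : ∀ s : ℝ, (∑ j ∈ Finset.range 3, ((s/2) ^ j / (j.factorial : ℝ)) • iteratedDeriv j u 0)
        = Wst L (u 0) s := by
      intro s
      simp only [Finset.sum_range_succ, Finset.sum_range_zero, e0, e1, e2]
      simp only [hv_def, Wst, Nat.factorial, pow_zero, pow_one]
      norm_num
      module
    have := (T3u'.congr_left (fun s => by rw [Function.comp, hsum s])).trans hhalf
    exact this.neg_left.congr_left fun s => by rw [neg_sub]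
  -- Lipschitz estimate for gg L near u 0
  have hgc : ContDiffAt ℝ 1 (gg L) (u 0) := hg.contDiffAt.of_le hone
  obtain ⟨K, t, ht_mem, hK⟩ := hgc.exists_lipschitzOnWith
  have hWtend : Filter.Tendsto (fun s : ℝ => Wst L (u 0) s) (nhds 0) (nhds (u 0)) := by
    have hc : Continuous (fun s : ℝ => Wst L (u 0) s) := by
      unfold Wst; fun_prop
    have h0 : Wst L (u 0) 0 = u 0 := by simp [Wst]
    simpa [h0] using hc.tendsto 0
  have hUtend : Filter.Tendsto (fun s : ℝ => u (s / 2)) (nhds 0) (nhds (u 0)) := by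
    have := (hus.continuous.tendsto 0).comp htend
    exact this
  have hW_in : ∀ᶠ s in nhds 0, Wst L (u 0) s ∈ t := hWtend ht_mem
  have hU_in : ∀ᶠ s in nhds 0, u (s / 2) ∈ t := hUtend ht_mem
  have hO2 : (fun s : ℝ => gg L (Wst L (u 0) s) - gg L (u (s / 2)))
      =O[nhds 0] fun s : ℝ => Wst L (u 0) s - u (s / 2) := by
    apply Asymptotics.IsBigO.of_bound K
    filter_upwards [hW_in, hU_in] with s h1 h2
    have := hK.dist_le_mul _ h1 _ h2
    rwa [dist_eq_norm, dist_eq_norm] at this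
  have hO2' : (fun s : ℝ => gg L (Wst L (u 0) s) - gg L (u (s / 2))) =O[nhds 0]
      fun s : ℝ => s ^ 3 := hO2.trans hWd
  -- Taylor remainder for v at s/2
  have hO3 : (fun s : ℝ => v (s / 2) - ∑ j ∈ Finset.range 3,
      ((s / 2) ^ j / (j.factorial : ℝ)) • iteratedDeriv j v 0) =O[nhds 0]
      fun s : ℝ => s ^ 3 := (T3v'.congr_left fun s => rfl).trans hhalf
  -- key algebraic identity
  have hkey : (fun s : ℝ =>
      u 0 + s • L (u 0) + (s ^ 2 / 6) •
        (gg L (u 0) + (2 : ℝ) • gg L (Wst L (u 0) s)) - u s)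
      = fun s : ℝ =>
        (s ^ 2 / 3) • (gg L (Wst L (u 0) s) - gg L (u (s / 2)))
        + (s ^ 2 / 3) • (v (s / 2) - ∑ j ∈ Finset.range 3,
            ((s / 2) ^ j / (j.factorial : ℝ)) • iteratedDeriv j v 0)
        - (u s - ∑ j ∈ Finset.range 5, (s ^ j / (j.factorial : ℝ)) • iteratedDeriv j u 0) := by
    funext s
    have hv_half : v (s / 2) = gg L (u (s / 2)) := rfl
    simp only [Finset.sum_range_succ, Finset.sum_range_zero, e0, e1, e2, e3, e4, f0, hv_half]
    simp only [Nat.factorial, pow_zero, pow_one]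
    norm_num
    module
  rw [hkey]
  have hp1 : (fun s : ℝ => s ^ 2 / 3) =O[nhds 0] fun s : ℝ => s ^ 2 := by
    have : (fun s : ℝ => s ^ 2 / 3) = fun s : ℝ => (1/3) * s ^ 2 := funext fun s => by ring
    rw [this]
    exact (isBigO_refl (fun s : ℝ => s ^ 2) _).const_mul_left _
  have hmul : ∀ (F : ℝ → E), F =O[nhds 0] (fun s : ℝ => s ^ 3) →
      (fun s : ℝ => (s ^ 2 / 3) • F s) =O[nhds 0] fun s : ℝ => s ^ 5 := by
    intro F hF
    have := hp1.smul hF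
    refine this.trans (Asymptotics.IsBigO.of_bound 1 ?_)
    filter_upwards with s
    simp [abs_mul, abs_pow, ← pow_add]
  exact ((hmul _ hO2').add (hmul _ hO3)).sub T5

/-- Two-stage fourth-order temporal discretization: local truncation error O(Δt⁵). -/
theorem two_stage_fourth_order_accuracy
    {E : Type*} [NormedAddCommGroup E] [NormedSpace ℝ E]
    (L : E → E) (hL : ContDiff ℝ (⊤ : ℕ∞) L)
    (w : ℝ → E) (hw : ∀ t, HasDerivAt w (L (w t)) t)
    (tn : ℝ) :
    (fun Δt : ℝ =>
      (w tn + Δt • L (w tn) + (Δt ^ 2 / 6) •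
        ((fderiv ℝ L (w tn)) (L (w tn)) +
          (2 : ℝ) • (fderiv ℝ L
            (w tn + (Δt / 2) • L (w tn) +
              (Δt ^ 2 / 8) • (fderiv ℝ L (w tn)) (L (w tn))))
            (L (w tn + (Δt / 2) • L (w tn) +
              (Δt ^ 2 / 8) • (fderiv ℝ L (w tn)) (L (w tn))))))
        - w (tn + Δt)) =O[nhds 0] (fun Δt : ℝ => Δt ^ 5) := by
  have hL' : ContDiff ℝ ∞ L := hL.of_le (by simp)
  have hw_diff : Differentiable ℝ w := fun t => (hw t).differentiableAt
  have hderiv_w : deriv w = fun t => L (w t) := funext fun t => (hw t).deriv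
  have hw_n : ∀ n : ℕ, ContDiff ℝ n w := by
    intro n
    induction n with
    | zero => exact contDiff_zero.mpr hw_diff.continuous
    | succ n ih =>
      rw [show ((n + 1 : ℕ) : WithTop ℕ∞) = (n : WithTop ℕ∞) + 1 by push_cast; ring,
        contDiff_succ_iff_deriv]
      refine ⟨hw_diff, ?_, ?_⟩
      · intro h
        exfalso
        have : ((n : ℕ∞) : WithTop ℕ∞) ≠ (⊤ : WithTop ℕ∞) := by
          simp [WithTop.coe_ne_top]
        exact this (by exact_mod_cast h)
      · rw [hderiv_w]
        exact (hL.of_le (by exact_mod_cast le_top)).comp ih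
  have hw_smooth : ContDiff ℝ ∞ w := by
    rw [contDiff_infty_iff_deriv]
    refine ⟨hw_diff, ?_⟩
    rw [hderiv_w]
    exact hL'.comp (by rw [contDiff_infty]; exact fun n => hw_n n)
  have hu : ∀ s, HasDerivAt (fun s : ℝ => w (tn + s)) (L (w (tn + s))) s := by
    intro s
    have h := (hw (tn + s)).scomp s ((hasDerivAt_id s).const_add tn)
    simpa [Function.comp_def] using h
  have hus : ContDiff ℝ ∞ (fun s : ℝ => w (tn + s)) :=
    hw_smooth.comp (contDiff_const.add contDiff_id)
  have := two_stage_aux L hL' (fun s => w (tn + s)) hu hus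
  simpa [gg, Wst] using this
end

section
/- For a smooth thrice continuously differentiable flux F with 𝔽(δ) = ∫_{t_n}^{t_n+δ} F(t) dt, the formula 4(𝔽(Δt) − 2𝔽(Δt/2))/Δt² equals F'(t_n) + O(Δt) as Δt → 0. -/
open Asymptotics Filter

lemma step_isBigO {g g' : ℝ → ℝ} {k : ℕ}
    (hg : ∀ x, HasDerivAt g (g' x) x) (h0 : g 0 = 0)
    (h : g' =O[nhds 0] fun x => x ^ k) :
    g =O[nhds 0] fun x => x ^ (k + 1) := by
  rw [Asymptotics.isBigO_iff] at h
  obtain ⟨c, hc⟩ := h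
  rw [Metric.eventually_nhds_iff] at hc
  obtain ⟨ε, hε, hball⟩ := hc
  set c' := max c 0 with hc'
  have hc'0 : 0 ≤ c' := le_max_right _ _
  rw [Asymptotics.isBigO_iff]
  refine ⟨c', Metric.eventually_nhds_iff.mpr ⟨ε, hε, ?_⟩⟩
  intro x hx
  rw [Real.dist_eq, sub_zero] at hx
  have key : ∀ y ∈ Set.uIcc 0 x, ‖g' y‖ ≤ c' * |x| ^ k := by
    intro y hy
    have hyx : |y| ≤ |x| := by
      rcases Set.mem_uIcc.mp hy with ⟨h1, h2⟩ | ⟨h1, h2⟩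
      · rw [abs_of_nonneg h1, abs_of_nonneg (h1.trans h2)]; exact h2
      · rw [abs_of_nonpos h2, abs_of_nonpos (h1.trans h2)]; linarith
    have hyb : dist y 0 < ε := by rw [Real.dist_eq, sub_zero]; exact lt_of_le_of_lt hyx hx
    calc ‖g' y‖ ≤ c * ‖y ^ k‖ := hball hyb
      _ ≤ c' * |y| ^ k := by
          rw [norm_pow, Real.norm_eq_abs]
          exact mul_le_mul_of_nonneg_right (le_max_left _ _) (by positivity)
      _ ≤ c' * |x| ^ k :=
          mul_le_mul_of_nonneg_left (pow_le_pow_left₀ (abs_nonneg _) hyx k) hc'0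
  have hmvt := (convex_uIcc 0 x).norm_image_sub_le_of_norm_hasDerivWithin_le
    (fun y _ => (hg y).hasDerivWithinAt) key (Set.left_mem_uIcc) (Set.right_mem_uIcc)
  rw [h0, sub_zero, sub_zero, Real.norm_eq_abs] at hmvt
  calc ‖g x‖ ≤ c' * |x| ^ k * |x| := hmvt
    _ = c' * ‖x ^ (k + 1)‖ := by rw [norm_pow, Real.norm_eq_abs, pow_succ]; ring

lemma flux_aux (F : ℝ → ℝ) (hF : ContDiff ℝ 3 F) (tn : ℝ) :
    (fun δ : ℝ => (∫ t in tn..(tn + δ), F t) - 2 * (∫ t in tn..(tn + δ / 2), F t)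
        - deriv F tn * δ ^ 2 / 4)
      =O[nhds 0] fun δ => δ ^ 3 := by
  have hFc : Continuous F := hF.continuous
  have h21 : ((3 : WithTop ℕ∞)) = 2 + 1 := by norm_num
  have hF1 : ContDiff ℝ 2 (deriv F) := (contDiff_succ_iff_deriv.mp (h21 ▸ hF)).2.2
  have h11 : ((2 : WithTop ℕ∞)) = 1 + 1 := by norm_num
  have hF2 : ContDiff ℝ 1 (deriv (deriv F)) := (contDiff_succ_iff_deriv.mp (h11 ▸ hF1)).2.2
  have hFd : ∀ x, HasDerivAt F (deriv F x) x := fun x =>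
    ((hF.differentiable (by norm_num)) x).hasDerivAt
  have hF1d : ∀ x, HasDerivAt (deriv F) (deriv (deriv F) x) x := fun x =>
    ((hF1.differentiable (by norm_num)) x).hasDerivAt
  have hF2c : Continuous (deriv (deriv F)) := hF2.continuous
  have hG : ∀ x, HasDerivAt (fun u => ∫ t in tn..u, F t) (F x) x := fun x =>
    intervalIntegral.integral_hasDerivAt_right (hFc.intervalIntegrable _ _)
      (hFc.stronglyMeasurableAtFilter _ _) hFc.continuousAt
  -- composition helpers
  have hcomp : ∀ (φ ψ : ℝ → ℝ), (∀ y, HasDerivAt φ (ψ y) y) → ∀ x : ℝ,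
      HasDerivAt (fun δ => φ (tn + δ)) (ψ (tn + x)) x := by
    intro φ ψ hφ x
    simpa [Function.comp_def] using (hφ (tn + x)).comp x ((hasDerivAt_id x).const_add tn)
  have hcomp2 : ∀ (φ ψ : ℝ → ℝ), (∀ y, HasDerivAt φ (ψ y) y) → ∀ x : ℝ,
      HasDerivAt (fun δ => φ (tn + δ / 2)) (ψ (tn + x / 2) / 2) x := by
    intro φ ψ hφ x
    have := (hφ (tn + x / 2)).comp x (((hasDerivAt_id x).div_const 2).const_add tn)
    simpa [Function.comp_def, div_eq_mul_inv] using this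
  -- derivative chain
  have hder3 : ∀ x : ℝ, HasDerivAt
      (fun δ => deriv F (tn + δ) - deriv F (tn + δ / 2) / 2 - deriv F tn / 2)
      (deriv (deriv F) (tn + x) - deriv (deriv F) (tn + x / 2) / 4) x := by
    intro x
    have h := (((hcomp (deriv F) _ hF1d x).sub
      ((hcomp2 (deriv F) _ hF1d x).div_const 2)).sub_const (deriv F tn / 2))
    exact h.congr_deriv (by ring)
  have hder2 : ∀ x : ℝ, HasDerivAt
      (fun δ => F (tn + δ) - F (tn + δ / 2) - deriv F tn * δ / 2)
      (deriv F (tn + x) - deriv F (tn + x / 2) / 2 - deriv F tn / 2) x := by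
    intro x
    have h3 : HasDerivAt (fun δ : ℝ => deriv F tn * δ / 2) (deriv F tn / 2) x := by
      simpa using ((hasDerivAt_id x).const_mul (deriv F tn)).div_const 2
    exact ((hcomp F _ hFd x).sub (hcomp2 F _ hFd x)).sub h3
  have hder1 : ∀ x : ℝ, HasDerivAt
      (fun δ : ℝ => (∫ t in tn..(tn + δ), F t) - 2 * (∫ t in tn..(tn + δ / 2), F t)
        - deriv F tn * δ ^ 2 / 4)
      (F (tn + x) - F (tn + x / 2) - deriv F tn * x / 2) x := by
    intro x
    have h1 := hcomp _ _ hG x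
    have h2 := (hcomp2 _ _ hG x).const_mul 2
    have h3 : HasDerivAt (fun δ : ℝ => deriv F tn * δ ^ 2 / 4)
        (deriv F tn * (2 * x ^ 1) / 4) x :=
      ((hasDerivAt_pow 2 x).const_mul (deriv F tn)).div_const 4
    have h := (h1.sub h2).sub h3
    exact h.congr_deriv (by ring)
  -- base case: third derivative expression is O(1)
  have H3 : (fun x : ℝ => deriv (deriv F) (tn + x) - deriv (deriv F) (tn + x / 2) / 4)
      =O[nhds 0] fun x : ℝ => x ^ 0 := by
    have hcont : Continuous fun x : ℝ => deriv (deriv F) (tn + x) - deriv (deriv F) (tn + x / 2) / 4 := by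
      fun_prop
    have e : (fun x : ℝ => x ^ (0 : ℕ)) = fun _ => (1 : ℝ) := funext fun x => pow_zero x
    rw [e]
    exact hcont.continuousAt.isBigO_one ℝ
  have H2 := step_isBigO hder3 (by simp; ring) H3
  have H1 := step_isBigO hder2 (by simp) H2
  have H0 := step_isBigO hder1 (by simp) H1
  exact H0

/-- First-order accuracy of the extraction of the flux time derivative
from the half-step and full-step time integrals. -/
theorem flux_derivative_extraction_first_order
    (F : ℝ → ℝ) (hF : ContDiff ℝ 3 F) (tn : ℝ) :
    (fun Δt : ℝ =>
        4 * ((∫ t in tn..(tn + Δt), F t) - 2 * ∫ t in tn..(tn + Δt / 2), F t)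
            / Δt ^ 2
          - deriv F tn)
      =O[nhdsWithin 0 {0}ᶜ] (fun Δt : ℝ => Δt) := by
  have hf := flux_aux F hF tn
  rw [Asymptotics.isBigO_iff] at hf ⊢
  obtain ⟨c, hc⟩ := hf
  refine ⟨4 * c, ?_⟩
  have hc' := nhdsWithin_le_nhds (s := ({0}ᶜ : Set ℝ)) hc
  filter_upwards [hc', self_mem_nhdsWithin] with x hx hx0
  have hx0' : x ≠ 0 := hx0
  have hx2 : (0 : ℝ) < x ^ 2 := by positivity
  have e : 4 * ((∫ t in tn..(tn + x), F t) - 2 * ∫ t in tn..(tn + x / 2), F t) / x ^ 2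
      - deriv F tn
      = 4 * ((∫ t in tn..(tn + x), F t) - 2 * (∫ t in tn..(tn + x / 2), F t)
          - deriv F tn * x ^ 2 / 4) / x ^ 2 := by
    field_simp
  rw [e]
  simp only [Real.norm_eq_abs] at hx ⊢
  rw [abs_div, abs_mul, abs_of_nonneg (by norm_num : (0:ℝ) ≤ 4), abs_of_nonneg hx2.le]
  rw [abs_pow] at hx
  calc 4 * |(∫ t in tn..(tn + x), F t) - 2 * (∫ t in tn..(tn + x / 2), F t)
          - deriv F tn * x ^ 2 / 4| / x ^ 2
      ≤ 4 * (c * |x| ^ 3) / x ^ 2 := by gcongr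
    _ = 4 * c * |x| := by
        rw [show |x| ^ 3 = |x| * x ^ 2 by rw [pow_succ, sq_abs]; ring]
        field_simp
end
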